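/- Let K be a field of characteristic 2, and let V_4 ⊂ S_4 be the Klein four-group generated by (1,2)(3,4) and (1,3)(2,4), acting on K(x_1,x_2,x_3,x_4) by permuting the variables. Then the fixed field K(x_1,x_2,x_3,x_4)^{V_4} is generated over K by v_1 = x_1+x_2+x_3+x_4, v_2 = x_1x_2+x_3x_4, v_3 = x_1x_3+x_2x_4, and v_4 = x_1x_4+x_2x_3. -/

import Mathlib

noncomputable section

/-- The rational function field `K(x_i : i ∈ I)` over `K`, realized as the fraction field
of the multivariate polynomial ring. -/
abbrev RFF (K : Type) [Field K] (I : Type) := FractionRing (MvPolynomial I K)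

/-- The image of the variable `x_i` in the rational function field `K(x_i : i ∈ I)`. -/
noncomputable def Xvar (K : Type) [Field K] (I : Type) (i : I) : RFF K I :=
  algebraMap (MvPolynomial I K) (RFF K I) (MvPolynomial.X i)

/-- Permutations of the variables as `K`-algebra automorphisms of the polynomial ring. -/
def renameHom (K : Type) [Field K] (I : Type) :
    Equiv.Perm I →* (MvPolynomial I K ≃ₐ[K] MvPolynomial I K) where
  toFun σ := MvPolynomial.renameEquiv K σ
  map_one' := MvPolynomial.renameEquiv_refl K
  map_mul' σ τ := (MvPolynomial.renameEquiv_trans K τ σ).symm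

/-- The action of permutations of the variables on `K(x_i : i ∈ I)` by `K`-automorphisms,
determined by `σ(x_i) = x_{σ(i)}`. -/
noncomputable def permHom (K : Type) [Field K] (I : Type) :
    Equiv.Perm I →* (RFF K I ≃ₐ[K] RFF K I) :=
  (IsFractionRing.fieldEquivOfAlgEquivHom K (RFF K I)).comp (renameHom K I)

/-- The fixed field `K(x_i : i ∈ I)^G` of a group `G` of permutations of the variables. -/
noncomputable def fixedSub (K : Type) [Field K] (I : Type) (G : Subgroup (Equiv.Perm I)) :
    IntermediateField K (RFF K I) :=
  IntermediateField.fixedField (G.map (permHom K I))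

/-- An extension `L/K` is `K`-rational if it is purely transcendental over `K`, i.e. generated
by finitely many algebraically independent elements. -/
def IsRatExt (K : Type) [Field K] (L : Type*) [Field L] [Algebra K L] : Prop :=
  ∃ (n : ℕ) (t : Fin n → L), AlgebraicIndependent K t ∧
    IntermediateField.adjoin K (Set.range t) = ⊤

/-! In characteristic 2 the elementary symmetric functions of `x₁, …, x₄` are rational in the
invariants: `e₁ = v₁`, `e₂ = v₂ + v₃ + v₄`, `v₁ e₃ = v₂v₃ + v₂v₄ + v₃v₄` and
`v₁² e₄ = v₂v₃v₄ + e₃²`. Hence `x₁` is a root of a quartic over `E = K(v₁, …, v₄)`. Moreover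
`v₁x₁ + v₂ = (x₁ + x₃)(x₁ + x₄)` and its two analogues, together with
`(x₁ + x₂)(x₁ + x₃)(x₁ + x₄) = v₁x₁² + e₃`, recover `x₂, x₃, x₄` from `x₁`, so
`K(x₁, …, x₄) = E(x₁)` has degree at most 4 over `E`. Since `E` is fixed by `V₄`, whose fixed
field has codimension `|V₄| = 4` by Artin's theorem, `E` is the whole fixed field. -/

open IntermediateField Polynomial Module

section FixedField

variable {K L : Type*} [Field K] [Field L] [Algebra K L]

theorem IntermediateField.fixedField_eq_of_le_of_finrank_le {H : Subgroup (L ≃ₐ[K] L)}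
    {E : IntermediateField K L} [FiniteDimensional E L] (hle : E ≤ fixedField H)
    (hrank : finrank E L ≤ Nat.card H) : fixedField H = E := by
  have : Finite H := Nat.finite_of_card_ne_zero (finrank_pos.trans_le hrank).ne'
  have := Fintype.ofFinite H
  have hcard : finrank (fixedField H) L = Nat.card H := by
    rw [Nat.card_eq_fintype_card]
    exact FixedPoints.finrank_eq_card H L
  exact (eq_of_le_of_finrank_le' hle (hcard ▸ hrank)).symm

theorem IntermediateField.adjoin_le_fixedField_map_closure {G : Type*} [Group G]
    (f : G →* (L ≃ₐ[K] L)) {T : Set G} {s : Set L} (h : ∀ g ∈ T, ∀ v ∈ s, f g v = v) :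
    adjoin K s ≤ fixedField ((Subgroup.closure T).map f) := by
  refine adjoin_le_iff.2 fun v hv => (mem_fixedField_iff _ _).2 ?_
  rintro _ ⟨g, hg, rfl⟩
  have : Subgroup.closure T ≤ (MulAction.stabilizer (L ≃ₐ[K] L) v).comap f :=
    (Subgroup.closure_le _).2 fun g hg' => h g hg' v hv
  exact this hg

end FixedField

section AdjoinSimple

variable {E L : Type*} [Field E] [Field L] [Algebra E L] {x : L}

theorem IntermediateField.finiteDimensional_of_adjoin_simple_eq_top (hx : IsIntegral E x)
    (htop : E⟮x⟯ = ⊤) : FiniteDimensional E L := by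
  have := adjoin.finiteDimensional hx
  rw [htop] at this
  exact topEquiv.toLinearEquiv.finiteDimensional

theorem IntermediateField.finrank_le_natDegree_of_adjoin_simple_eq_top {p : E[X]}
    (hp : p.Monic) (hpx : aeval x p = 0) (htop : E⟮x⟯ = ⊤) : finrank E L ≤ p.natDegree := by
  rw [← finrank_top', ← htop, adjoin.finrank ⟨p, hp, by rwa [← aeval_def]⟩]
  exact natDegree_le_natDegree (minpoly.min E x hp hpx)

end AdjoinSimple

theorem IntermediateField.adjoin_image_algebraMap_eq_top {K A L : Type*} [Field K] [CommRing A]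
    [Algebra K A] [Field L] [Algebra A L] [Algebra K L] [IsScalarTower K A L]
    [IsFractionRing A L] {s : Set A} (hs : Algebra.adjoin K s = ⊤) :
    adjoin K (algebraMap A L '' s) = ⊤ := by
  have hA : ∀ r : A, algebraMap A L r ∈ adjoin K (algebraMap A L '' s) := fun r =>
    algebra_adjoin_le_adjoin K _ <| by
      rw [← IsScalarTower.coe_toAlgHom' K A L, Algebra.adjoin_image, hs]
      exact Subalgebra.mem_map.2 ⟨r, Algebra.mem_top, rfl⟩
  refine eq_top_iff.2 fun z _ => ?_
  obtain ⟨p, q, -, rfl⟩ := IsFractionRing.div_surjective (A := A) z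
  exact div_mem (hA p) (hA q)

def kleinInvariants {L : Type*} [Mul L] [Add L] (a b c d : L) : Set L :=
  {a + b + c + d, a * b + c * d, a * c + b * d, a * d + b * c}

section CharTwo

variable {L : Type*} [Field L] [CharP L 2] {S : Type*} [SetLike S L] [SubfieldClass S L]
  {F : S} {a b c d : L}

theorem esymm_three_mem_of_kleinInvariants_subset (h : kleinInvariants a b c d ⊆ F)
    (hs : a + b + c + d ≠ 0) : a * b * c + a * b * d + a * c * d + b * c * d ∈ F := by
  simp only [kleinInvariants, Set.insert_subset_iff, Set.singleton_subset_iff] at h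
  obtain ⟨hs', h₁, h₂, h₃⟩ := h
  have e : a * b * c + a * b * d + a * c * d + b * c * d =
      ((a * b + c * d) * (a * c + b * d) + (a * b + c * d) * (a * d + b * c) +
        (a * c + b * d) * (a * d + b * c)) / (a + b + c + d) := by
    rw [eq_div_iff hs]; ring_nf; reduce_mod_char!
  rw [e]
  exact div_mem (add_mem (add_mem (mul_mem h₁ h₂) (mul_mem h₁ h₃)) (mul_mem h₂ h₃)) hs'

theorem esymm_four_mem_of_kleinInvariants_subset (h : kleinInvariants a b c d ⊆ F)
    (hs : a + b + c + d ≠ 0) : a * b * c * d ∈ F := by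
  have he₃ := esymm_three_mem_of_kleinInvariants_subset h hs
  simp only [kleinInvariants, Set.insert_subset_iff, Set.singleton_subset_iff] at h
  obtain ⟨hs', h₁, h₂, h₃⟩ := h
  have e : a * b * c * d = ((a * b + c * d) * (a * c + b * d) * (a * d + b * c) +
      (a * b * c + a * b * d + a * c * d + b * c * d) ^ 2) / (a + b + c + d) ^ 2 := by
    rw [eq_div_iff (pow_ne_zero 2 hs)]; ring_nf; reduce_mod_char!
  rw [e]
  exact div_mem (add_mem (mul_mem (mul_mem h₁ h₂) h₃) (pow_mem he₃ 2)) (pow_mem hs' 2)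

theorem mem_of_kleinInvariants_subset (h : kleinInvariants a b c d ⊆ F) (ha : a ∈ F)
    (hs : a + b + c + d ≠ 0) (hab : a ≠ b) (hac : a ≠ c) (had : a ≠ d) :
    b ∈ F ∧ c ∈ F ∧ d ∈ F := by
  have he₃ := esymm_three_mem_of_kleinInvariants_subset h hs
  simp only [kleinInvariants, Set.insert_subset_iff, Set.singleton_subset_iff] at h
  obtain ⟨hs', h₁, h₂, h₃⟩ := h
  have hcd : (a + c) * (a + d) ∈ F := by
    convert add_mem (mul_mem hs' ha) h₁ using 1; ring_nf; reduce_mod_char!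
  have hbd : (a + b) * (a + d) ∈ F := by
    convert add_mem (mul_mem hs' ha) h₂ using 1; ring_nf; reduce_mod_char!
  have hbc : (a + b) * (a + c) ∈ F := by
    convert add_mem (mul_mem hs' ha) h₃ using 1; ring_nf; reduce_mod_char!
  have hbcd : (a + b) * (a + c) * (a + d) ∈ F := by
    convert add_mem (mul_mem hs' (pow_mem ha 2)) he₃ using 1; ring
  have hb : a + b ≠ 0 := fun h => hab (CharTwo.add_eq_zero.mp h)
  have hc : a + c ≠ 0 := fun h => hac (CharTwo.add_eq_zero.mp h)
  have hd : a + d ≠ 0 := fun h => had (CharTwo.add_eq_zero.mp h)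
  have of_add_mem : ∀ {y}, a + y ∈ F → y ∈ F := fun {y} hy => by
    simpa only [CharTwo.add_cancel_left] using add_mem ha hy
  refine ⟨of_add_mem ?_, of_add_mem ?_, of_add_mem ?_⟩
  · convert div_mem (mul_mem hbc hbd) hbcd using 1; field_simp
  · convert div_mem (mul_mem hbc hcd) hbcd using 1; field_simp
  · convert div_mem (mul_mem hbd hcd) hbcd using 1; field_simp

end CharTwo

section KleinFour

variable {K L : Type*} [Field K] [Field L] [Algebra K L] [CharP L 2] {a b c d : L}

theorem exists_monic_quartic_aeval_eq_zero_of_kleinInvariants_subset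
    {E : IntermediateField K L} (h : kleinInvariants a b c d ⊆ E) (hs : a + b + c + d ≠ 0) :
    ∃ p : E[X], p.Monic ∧ p.natDegree = 4 ∧ aeval a p = 0 := by
  have he₁ : a + b + c + d ∈ E := h (by simp [kleinInvariants])
  have he₂ : (a * b + c * d) + (a * c + b * d) + (a * d + b * c) ∈ E :=
    add_mem (add_mem (h (by simp [kleinInvariants])) (h (by simp [kleinInvariants])))
      (h (by simp [kleinInvariants]))
  have he₃ := esymm_three_mem_of_kleinInvariants_subset h hs
  have he₄ := esymm_four_mem_of_kleinInvariants_subset h hs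
  refine ⟨X ^ 4 + C ⟨_, he₁⟩ * X ^ 3 + C ⟨_, he₂⟩ * X ^ 2 + C ⟨_, he₃⟩ * X + C ⟨_, he₄⟩,
    by monicity!, by compute_degree!, ?_⟩
  simp only [map_add, map_mul, map_pow, aeval_X, aeval_C, IntermediateField.algebraMap_apply]
  ring_nf; reduce_mod_char!

theorem adjoin_simple_eq_top_of_kleinInvariants (htop : adjoin K {a, b, c, d} = ⊤)
    (hs : a + b + c + d ≠ 0) (hab : a ≠ b) (hac : a ≠ c) (had : a ≠ d) :
    (adjoin K (kleinInvariants a b c d))⟮a⟯ = ⊤ := by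
  set E := adjoin K (kleinInvariants a b c d)
  apply restrictScalars_injective K
  rw [restrictScalars_top, eq_top_iff, ← htop, adjoin_le_iff]
  have hE : kleinInvariants a b c d ⊆ E⟮a⟯.restrictScalars K := fun v hv =>
    IntermediateField.algebraMap_mem E⟮a⟯ (⟨v, subset_adjoin K _ hv⟩ : E)
  have ha : a ∈ E⟮a⟯.restrictScalars K := mem_adjoin_simple_self E a
  obtain ⟨hb, hc, hd⟩ := mem_of_kleinInvariants_subset hE ha hs hab hac had
  rintro _ (rfl | rfl | rfl | rfl) <;> assumption

theorem fixedField_eq_adjoin_kleinInvariants {H : Subgroup (L ≃ₐ[K] L)} (hH : 4 ≤ Nat.card H)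
    (hfix : adjoin K (kleinInvariants a b c d) ≤ fixedField H)
    (htop : adjoin K {a, b, c, d} = ⊤) (hs : a + b + c + d ≠ 0) (hab : a ≠ b) (hac : a ≠ c)
    (had : a ≠ d) : fixedField H = adjoin K (kleinInvariants a b c d) := by
  obtain ⟨p, hp, hdeg, hpa⟩ :=
    exists_monic_quartic_aeval_eq_zero_of_kleinInvariants_subset (subset_adjoin K _) hs
  have hgen := adjoin_simple_eq_top_of_kleinInvariants htop hs hab hac had
  have := finiteDimensional_of_adjoin_simple_eq_top ⟨p, hp, by rwa [← aeval_def]⟩ hgen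
  refine fixedField_eq_of_le_of_finrank_le hfix ?_
  calc finrank _ L ≤ p.natDegree := finrank_le_natDegree_of_adjoin_simple_eq_top hp hpa hgen
    _ ≤ Nat.card H := hdeg ▸ hH

end KleinFour

section RationalFunctionField

variable (K : Type) [Field K] (I : Type)

theorem Xvar_injective : Function.Injective (Xvar K I) :=
  (IsFractionRing.injective (MvPolynomial I K) (RFF K I)).comp MvPolynomial.X_injective

theorem adjoin_range_Xvar : adjoin K (Set.range (Xvar K I)) = ⊤ := by
  rw [show Xvar K I = algebraMap _ _ ∘ MvPolynomial.X from rfl, Set.range_comp]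
  exact adjoin_image_algebraMap_eq_top MvPolynomial.adjoin_range_X

theorem permHom_Xvar (σ : Equiv.Perm I) (i : I) :
    permHom K I σ (Xvar K I i) = Xvar K I (σ i) := by
  change IsFractionRing.fieldEquivOfAlgEquiv K (RFF K I) (RFF K I)
    (MvPolynomial.renameEquiv K σ) (algebraMap _ _ (MvPolynomial.X i)) = _
  rw [IsFractionRing.fieldEquivOfAlgEquiv_algebraMap]
  simp [Xvar]

theorem permHom_injective : Function.Injective (permHom K I) := fun σ τ h =>
  Equiv.ext fun i => Xvar_injective K I <| by rw [← permHom_Xvar, h, permHom_Xvar]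

end RationalFunctionField

section FourVariables

variable (K : Type) [Field K]

theorem adjoin_Xvar_fin_four :
    adjoin K {Xvar K (Fin 4) 0, Xvar K (Fin 4) 1, Xvar K (Fin 4) 2, Xvar K (Fin 4) 3} = ⊤ := by
  rw [← adjoin_range_Xvar K (Fin 4)]
  congr 1
  ext
  simp [Fin.exists_fin_succ, eq_comm]

theorem Xvar_fin_four_sum_ne_zero :
    Xvar K (Fin 4) 0 + Xvar K (Fin 4) 1 + Xvar K (Fin 4) 2 + Xvar K (Fin 4) 3 ≠ 0 := by
  simp only [Xvar, ← map_add]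
  refine (map_ne_zero_iff _ (IsFractionRing.injective _ _)).2 fun h => ?_
  simpa using congrArg (MvPolynomial.eval (Pi.single 0 1)) h

def kleinFourGenerators : Set (Equiv.Perm (Fin 4)) :=
  {Equiv.swap 0 1 * Equiv.swap 2 3, Equiv.swap 0 2 * Equiv.swap 1 3}

theorem four_le_card_closure_kleinFourGenerators :
    4 ≤ Nat.card (Subgroup.closure kleinFourGenerators) := by
  set σ := Equiv.swap (0 : Fin 4) 1 * Equiv.swap 2 3
  set τ := Equiv.swap (0 : Fin 4) 2 * Equiv.swap 1 3
  have hσ : σ ∈ Subgroup.closure kleinFourGenerators := Subgroup.subset_closure (.inl rfl)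
  have hτ : τ ∈ Subgroup.closure kleinFourGenerators := Subgroup.subset_closure (.inr rfl)
  have hsub : (({1, σ, τ, σ * τ} : Finset _) : Set (Equiv.Perm (Fin 4))) ⊆
      Subgroup.closure kleinFourGenerators := by
    simp [Set.insert_subset_iff, one_mem, hσ, hτ, mul_mem hσ hτ]
  calc 4 = (({1, σ, τ, σ * τ} : Finset _) : Set (Equiv.Perm (Fin 4))).ncard := by
        rw [Set.ncard_coe_finset]; decide
    _ ≤ _ := Set.ncard_le_ncard hsub
    _ = _ := (Nat.card_coe_set_eq _).symm

theorem permHom_apply_kleinInvariants_Xvar : ∀ g ∈ kleinFourGenerators, ∀ v ∈ kleinInvariants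
    (Xvar K (Fin 4) 0) (Xvar K (Fin 4) 1) (Xvar K (Fin 4) 2) (Xvar K (Fin 4) 3),
    permHom K (Fin 4) g v = v := by
  simp only [kleinFourGenerators, kleinInvariants, Set.mem_insert_iff, Set.mem_singleton_iff]
  rintro g (rfl | rfl) v (rfl | rfl | rfl | rfl) <;>
    simp [permHom_Xvar, Equiv.swap_apply_def] <;> ring

end FourVariables

/-- **Generators of the fixed field of the Klein four-group in characteristic 2.**
Let `K` be a field of characteristic 2 and `V₄ ⊂ S₄` the Klein four-group generated by
`(1,2)(3,4)` and `(1,3)(2,4)` (indices written `0,…,3`), acting on `K(x₁,x₂,x₃,x₄)` by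
permuting the variables. Then `K(x₁,x₂,x₃,x₄)^{V₄}` is generated over `K` by
`v₁ = x₁+x₂+x₃+x₄`, `v₂ = x₁x₂+x₃x₄`, `v₃ = x₁x₃+x₂x₄` and `v₄ = x₁x₄+x₂x₃`. -/
theorem fixedField_klein_four_char_two (K : Type) [Field K] [CharP K 2] :
    fixedSub K (Fin 4) (Subgroup.closure
        {Equiv.swap (0 : Fin 4) 1 * Equiv.swap 2 3,
         Equiv.swap (0 : Fin 4) 2 * Equiv.swap 1 3}) =
      IntermediateField.adjoin K
        {Xvar K (Fin 4) 0 + Xvar K (Fin 4) 1 + Xvar K (Fin 4) 2 + Xvar K (Fin 4) 3,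
         Xvar K (Fin 4) 0 * Xvar K (Fin 4) 1 + Xvar K (Fin 4) 2 * Xvar K (Fin 4) 3,
         Xvar K (Fin 4) 0 * Xvar K (Fin 4) 2 + Xvar K (Fin 4) 1 * Xvar K (Fin 4) 3,
         Xvar K (Fin 4) 0 * Xvar K (Fin 4) 3 + Xvar K (Fin 4) 1 * Xvar K (Fin 4) 2} := by
  have : CharP (RFF K (Fin 4)) 2 := charP_of_injective_algebraMap' K 2
  have hcard : 4 ≤ Nat.card ((Subgroup.closure kleinFourGenerators).map (permHom K (Fin 4))) :=
    Subgroup.card_map_of_injective (permHom_injective K (Fin 4)) ▸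
      four_le_card_closure_kleinFourGenerators
  have hX := Xvar_injective K (Fin 4)
  exact fixedField_eq_adjoin_kleinInvariants hcard
    (adjoin_le_fixedField_map_closure _ (permHom_apply_kleinInvariants_Xvar K))
    (adjoin_Xvar_fin_four K) (Xvar_fin_four_sum_ne_zero K)
    (hX.ne (by decide)) (hX.ne (by decide)) (hX.ne (by decide))
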